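/- Let 0 ≤ r₁ < r₂, let λ ∈ ℝ, and let u be a smooth real-valued function on the annulus A = {z ∈ ℂ : r₁ < |z| < r₂} satisfying ∂ₓ²u + ∂_y²u = −λu on A (i.e. u is an eigenfunction of the positive Laplacian with eigenvalue λ). For r ∈ (r₁, r₂) define I(r) = ∫₀^{2π} [ ((∂_z u)(re^{iθ}))² · i r e^{iθ} + (λ/4) (u(re^{iθ}))² · i r e^{−iθ} ] dθ, where ∂_z u = ½(∂ₓu − i∂_y u). Then I is constant on (r₁, r₂). -/

import Mathlib

open Complex MeasureTheory

/-- `∂_z u = ½(∂ₓu − i ∂_y u)` for a real-valued function `u` on `ℂ ≅ ℝ²`. -/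
noncomputable def wirtingerDeriv (u : ℂ → ℝ) (z : ℂ) : ℂ :=
  (1 / 2 : ℂ) * ((fderiv ℝ u z 1 : ℂ) - Complex.I * (fderiv ℝ u z Complex.I : ℂ))

/-- The integral `I(r)` of the 1-form `ω_u = (∂_z u)² dz − (λ/4) u² dz̄` over the
positively oriented circle of radius `r`: with `z = r e^{iθ}`, `dz = i r e^{iθ} dθ` and
`dz̄ = −i r e^{−iθ} dθ`, so
`I(r) = ∫₀^{2π} [ (∂_z u)² i r e^{iθ} + (λ/4) u² i r e^{−iθ} ] dθ`. -/
noncomputable def circleFormIntegral (u : ℂ → ℝ) (lam r : ℝ) : ℂ :=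
  ∫ θ in (0 : ℝ)..(2 * Real.pi),
    (wirtingerDeriv u ((r : ℂ) * Complex.exp (θ * Complex.I))) ^ 2 *
      (Complex.I * (r : ℂ) * Complex.exp (θ * Complex.I)) +
    ((lam : ℂ) / 4) * ((u ((r : ℂ) * Complex.exp (θ * Complex.I)) : ℂ)) ^ 2 *
      (Complex.I * (r : ℂ) * Complex.exp (-(θ * Complex.I)))

noncomputable def pLC : ℝ × ℝ →L[ℝ] ℂ :=
  Complex.ofRealCLM.comp (ContinuousLinearMap.fst ℝ ℝ ℝ) +
    Complex.I • Complex.ofRealCLM.comp (ContinuousLinearMap.snd ℝ ℝ ℝ)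
lemma pLC_apply (v : ℝ × ℝ) : pLC v = (v.1 : ℂ) + v.2 * Complex.I := by
  simp [pLC, mul_comm]
noncomputable def pE (p : ℝ × ℝ) : ℂ := Complex.exp (pLC p)
lemma pE_abs (p : ℝ × ℝ) : ‖pE p‖ = Real.exp p.1 := by
  rw [pE, Complex.norm_exp, pLC_apply]; simp
lemma hasFDerivAt_pE (p : ℝ × ℝ) : HasFDerivAt pE (pE p • pLC) p :=
  pLC.hasFDerivAt.cexp

lemma clm_expand (L : ℂ →L[ℝ] ℝ) (c : ℂ) : L c = c.re * L 1 + c.im * L Complex.I := by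
  conv_lhs => rw [← Complex.re_add_im c]
  rw [show (c.re : ℂ) + (c.im : ℂ) * Complex.I = c.re • (1 : ℂ) + c.im • (Complex.I : ℂ) by
    simp [Complex.real_smul]]
  rw [map_add, _root_.map_smul, _root_.map_smul]; simp

noncomputable def pF (u : ℂ → ℝ) (lam : ℝ) (p : ℝ × ℝ) : ℂ :=
  wirtingerDeriv u (pE p) * wirtingerDeriv u (pE p) * (Complex.I * pE p) +
  ((lam : ℂ) / 4 * ((u (pE p) : ℂ) * (u (pE p) : ℂ))) * (Complex.I * (starRingEnd ℂ) (pE p))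
noncomputable def pG (u : ℂ → ℝ) (lam : ℝ) (p : ℝ × ℝ) : ℂ :=
  -(wirtingerDeriv u (pE p) * wirtingerDeriv u (pE p) * pE p) +
  ((lam : ℂ) / 4 * ((u (pE p) : ℂ) * (u (pE p) : ℂ))) * (starRingEnd ℂ) (pE p)

lemma key (r₁ r₂ lam : ℝ) (u : ℂ → ℝ)
    (hu : ContDiffOn ℝ (⊤ : ℕ∞) u {z : ℂ | r₁ < ‖z‖ ∧ ‖z‖ < r₂})
    (heig : ∀ z ∈ {z : ℂ | r₁ < ‖z‖ ∧ ‖z‖ < r₂},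
      fderiv ℝ (fun p : ℂ => fderiv ℝ u p 1) z 1 +
        fderiv ℝ (fun p : ℂ => fderiv ℝ u p Complex.I) z Complex.I = -lam * u z)
    (p : ℝ × ℝ) (hp : pE p ∈ {z : ℂ | r₁ < ‖z‖ ∧ ‖z‖ < r₂}) :
    DifferentiableAt ℝ (pF u lam) p ∧ DifferentiableAt ℝ (pG u lam) p ∧
      fderiv ℝ (pF u lam) p (1, 0) + fderiv ℝ (pG u lam) p (0, 1) = 0 := by
  set S : Set ℂ := {z : ℂ | r₁ < ‖z‖ ∧ ‖z‖ < r₂} with hS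
  have hSopen : IsOpen S := by
    have : S = (fun w : ℂ => ‖w‖) ⁻¹' Set.Ioo r₁ r₂ := by ext w; simp [hS, Set.mem_Ioo]
    rw [this]; exact isOpen_Ioo.preimage continuous_norm
  set z : ℂ := pE p with hz
  have hCD : ContDiffAt ℝ (⊤ : ℕ∞) u z := hu.contDiffAt (hSopen.mem_nhds hp)
  have hfd : ContDiffAt ℝ (⊤ : ℕ∞) (fderiv ℝ u) z := hCD.fderiv_right (by simp)
  have hdu : HasFDerivAt u (fderiv ℝ u z) z := (hCD.differentiableAt (by simp)).hasFDerivAt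
  have hdu2 : HasFDerivAt (fderiv ℝ u) (fderiv ℝ (fderiv ℝ u) z) z :=
    (hfd.differentiableAt (by simp)).hasFDerivAt
  have ha1 : HasFDerivAt (fun q : ℂ => fderiv ℝ u q 1)
      ((ContinuousLinearMap.apply ℝ ℝ (1 : ℂ)).comp (fderiv ℝ (fderiv ℝ u) z)) z :=
    (ContinuousLinearMap.apply ℝ ℝ (1 : ℂ)).hasFDerivAt.comp z hdu2
  have ha2 : HasFDerivAt (fun q : ℂ => fderiv ℝ u q Complex.I)
      ((ContinuousLinearMap.apply ℝ ℝ (Complex.I)).comp (fderiv ℝ (fderiv ℝ u) z)) z :=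
    (ContinuousLinearMap.apply ℝ ℝ (Complex.I)).hasFDerivAt.comp z hdu2
  set Da1 : ℂ →L[ℝ] ℝ := fderiv ℝ (fun q : ℂ => fderiv ℝ u q 1) z with hDa1
  set Da2 : ℂ →L[ℝ] ℝ := fderiv ℝ (fun q : ℂ => fderiv ℝ u q Complex.I) z with hDa2
  have ha1' : HasFDerivAt (fun q : ℂ => fderiv ℝ u q 1) Da1 z := ha1.differentiableAt.hasFDerivAt
  have ha2' : HasFDerivAt (fun q : ℂ => fderiv ℝ u q Complex.I) Da2 z :=
    ha2.differentiableAt.hasFDerivAt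
  have hsymm : ∀ v w : ℂ, fderiv ℝ (fderiv ℝ u) z v w = fderiv ℝ (fderiv ℝ u) z w v := by
    refine second_derivative_symmetric_of_eventually (f := u) ?_ hdu2
    filter_upwards [hSopen.mem_nhds hp] with y hy
    exact ((hu.contDiffAt (hSopen.mem_nhds hy)).differentiableAt (by simp)).hasFDerivAt
  have hBC : Da1 Complex.I = Da2 1 := by
    rw [hDa1, hDa2, ha1.fderiv, ha2.fderiv]
    simpa using hsymm Complex.I 1
  have hAD : Da1 1 + Da2 Complex.I = -lam * u z := heig z hp
  have hE : HasFDerivAt pE (z • pLC) p := hasFDerivAt_pE p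
  have hw : HasFDerivAt (wirtingerDeriv u)
      ((1/2 : ℂ) • (Complex.ofRealCLM.comp Da1 - Complex.I • Complex.ofRealCLM.comp Da2)) z := by
    have h1 : HasFDerivAt (fun q : ℂ => ((fderiv ℝ u q 1 : ℝ) : ℂ))
        (Complex.ofRealCLM.comp Da1) z := Complex.ofRealCLM.hasFDerivAt.comp z ha1'
    have h2 : HasFDerivAt (fun q : ℂ => ((fderiv ℝ u q Complex.I : ℝ) : ℂ))
        (Complex.ofRealCLM.comp Da2) z := Complex.ofRealCLM.hasFDerivAt.comp z ha2'
    exact (h1.sub (h2.const_mul Complex.I)).const_mul ((1:ℂ)/2)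
  have hwE := hw.comp p hE
  have huE' : HasFDerivAt (fun q => u (pE q)) ((fderiv ℝ u z).comp (z • pLC)) p := hdu.comp p hE
  have huE : HasFDerivAt (fun q => ((u (pE q) : ℝ) : ℂ))
      (Complex.ofRealCLM.comp ((fderiv ℝ u z).comp (z • pLC))) p :=
    Complex.ofRealCLM.hasFDerivAt.comp p huE'
  have hconjfun : ⇑((Complex.conjCLE : ℂ ≃L[ℝ] ℂ) : ℂ →L[ℝ] ℂ) = (starRingEnd ℂ) := by
    funext w; simp
  have hconj : HasFDerivAt (starRingEnd ℂ) ((Complex.conjCLE : ℂ ≃L[ℝ] ℂ) : ℂ →L[ℝ] ℂ) z := by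
    rw [← hconjfun]; exact ContinuousLinearMap.hasFDerivAt _
  have hconjE := hconj.comp p hE
  have hF := ((hwE.mul hwE).mul (hE.const_mul Complex.I)).add
    (((huE.mul huE).const_mul ((lam:ℂ)/4)).mul (hconjE.const_mul Complex.I))
  have hG := (((hwE.mul hwE).mul hE).neg).add
    (((huE.mul huE).const_mul ((lam:ℂ)/4)).mul hconjE)
  have hF' : DifferentiableAt ℝ (pF u lam) p := hF.differentiableAt
  have hG' : DifferentiableAt ℝ (pG u lam) p := hG.differentiableAt
  refine ⟨hF', hG', ?_⟩
  have hFf := HasFDerivAt.fderiv (f := pF u lam) hF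
  have hGf := HasFDerivAt.fderiv (f := pG u lam) hG
  rw [hFf, hGf]
  simp only [ContinuousLinearMap.add_apply, ContinuousLinearMap.smul_apply,
    ContinuousLinearMap.coe_smul', Pi.smul_apply, ContinuousLinearMap.coe_comp',
    Function.comp_apply, ContinuousLinearMap.coe_sub', Pi.sub_apply,
    Complex.ofRealCLM_apply, ContinuousLinearMap.neg_apply, smul_eq_mul, pLC_apply,
    Complex.ofReal_one, Complex.ofReal_zero, zero_mul, one_mul, add_zero, zero_add,
    mul_one, Complex.conjCLE_apply, wirtingerDeriv]
  simp only [hconjfun]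
  simp only [← hz]
  rw [show (1:ℂ)/2 = ((2⁻¹:ℝ):ℂ) by norm_num,
    show (lam:ℂ)/4 = (((lam/4:ℝ)):ℂ) by push_cast; ring]
  rw [clm_expand Da1 (z * Complex.I), clm_expand Da2 (z * Complex.I),
    clm_expand (fderiv ℝ u z) (z * Complex.I), clm_expand Da1 z, clm_expand Da2 z,
    clm_expand (fderiv ℝ u z) z]
  rw [← hBC]
  have hD2 : Da2 Complex.I = -lam * u z - Da1 1 := by linarith
  rw [hD2]
  rw [Complex.ext_iff]
  constructor <;>
    simp only [Complex.mul_re, Complex.mul_im, Complex.add_re, Complex.add_im, Complex.sub_re,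
      Complex.sub_im, Complex.neg_re, Complex.neg_im, Complex.ofReal_re, Complex.ofReal_im,
      Complex.I_re, Complex.I_im, Complex.conj_re, Complex.conj_im, Complex.zero_re,
      Complex.zero_im, mul_zero, zero_mul, sub_zero, zero_sub, mul_one, one_mul, neg_neg,
      neg_zero, add_zero, zero_add, Complex.ofReal_sub, Complex.ofReal_mul, Complex.ofReal_neg] <;>
    ring

lemma pE_log (t θ : ℝ) (ht : 0 < t) :
    pE (Real.log t, θ) = (t : ℂ) * Complex.exp (θ * Complex.I) := by
  rw [pE, pLC_apply, Complex.exp_add]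
  congr 1
  rw [← Complex.ofReal_exp, Real.exp_log ht]

lemma boundary_eq (u : ℂ → ℝ) (lam t : ℝ) (ht : 0 < t) :
    (∫ θ in (0:ℝ)..(2 * Real.pi), pF u lam (Real.log t, θ)) = circleFormIntegral u lam t := by
  rw [circleFormIntegral]
  apply intervalIntegral.integral_congr
  intro θ _
  have hconjZ : (starRingEnd ℂ) ((t:ℂ) * Complex.exp (θ * Complex.I)) =
      (t:ℂ) * Complex.exp (-(θ * Complex.I)) := by
    rw [map_mul, Complex.conj_ofReal, ← Complex.exp_conj]
    congr 1
    simp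
  unfold pF
  beta_reduce
  rw [pE_log t θ ht, hconjZ]
  ring

lemma pG_periodic (u : ℂ → ℝ) (lam x : ℝ) : pG u lam (x, 2 * Real.pi) = pG u lam (x, 0) := by
  have h : pE (x, 2 * Real.pi) = pE (x, 0) := by
    rw [pE, pE, pLC_apply, pLC_apply]
    simp only []
    rw [Complex.exp_add, Complex.exp_add,
      show ((2 * Real.pi : ℝ) : ℂ) * Complex.I = 2 * (Real.pi : ℂ) * Complex.I by push_cast; ring,
      Complex.exp_two_pi_mul_I]
    norm_num
  rw [pG, pG, h]

lemma const_on (r₁ r₂ : ℝ) (hr₁ : 0 ≤ r₁) (lam : ℝ) (u : ℂ → ℝ)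
    (hu : ContDiffOn ℝ (⊤ : ℕ∞) u {z : ℂ | r₁ < ‖z‖ ∧ ‖z‖ < r₂})
    (heig : ∀ z ∈ {z : ℂ | r₁ < ‖z‖ ∧ ‖z‖ < r₂},
      fderiv ℝ (fun p : ℂ => fderiv ℝ u p 1) z 1 +
        fderiv ℝ (fun p : ℂ => fderiv ℝ u p Complex.I) z Complex.I = -lam * u z)
    {r s : ℝ} (h1 : r₁ < r) (hrs : r ≤ s) (h2 : s < r₂) :
    circleFormIntegral u lam r = circleFormIntegral u lam s := by
  have hr0 : 0 < r := lt_of_le_of_lt hr₁ h1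
  have hs0 : 0 < s := lt_of_lt_of_le hr0 hrs
  set a₁ : ℝ := Real.log r with ha₁
  set b₁ : ℝ := Real.log s with hb₁
  have hab : a₁ ≤ b₁ := Real.log_le_log hr0 hrs
  have hmem : ∀ q : ℝ × ℝ, q.1 ∈ Set.uIcc a₁ b₁ →
      pE q ∈ {z : ℂ | r₁ < ‖z‖ ∧ ‖z‖ < r₂} := by
    intro q hq
    rw [Set.uIcc_of_le hab] at hq
    constructor
    · rw [pE_abs]
      calc r₁ < r := h1
        _ = Real.exp a₁ := (Real.exp_log hr0).symm
        _ ≤ Real.exp q.1 := Real.exp_le_exp.mpr hq.1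
    · rw [pE_abs]
      calc Real.exp q.1 ≤ Real.exp b₁ := Real.exp_le_exp.mpr hq.2
        _ = s := Real.exp_log hs0
        _ < r₂ := h2
  have hkey : ∀ q : ℝ × ℝ, q.1 ∈ Set.uIcc a₁ b₁ →
      DifferentiableAt ℝ (pF u lam) q ∧ DifferentiableAt ℝ (pG u lam) q ∧
        fderiv ℝ (pF u lam) q (1, 0) + fderiv ℝ (pG u lam) q (0, 1) = 0 :=
    fun q hq => key r₁ r₂ lam u hu heig q (hmem q hq)
  have hq1 : ∀ q : ℝ × ℝ, q ∈ Set.uIcc a₁ b₁ ×ˢ Set.uIcc (0:ℝ) (2 * Real.pi) →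
      q.1 ∈ Set.uIcc a₁ b₁ := fun q hq => hq.1
  have hq1' : ∀ q : ℝ × ℝ,
      q ∈ Set.Ioo (a₁ ⊓ b₁) (a₁ ⊔ b₁) ×ˢ Set.Ioo ((0:ℝ) ⊓ (2 * Real.pi)) ((0:ℝ) ⊔ (2 * Real.pi)) \ (∅ : Set (ℝ × ℝ)) →
      q.1 ∈ Set.uIcc a₁ b₁ := by
    intro q hq
    exact Set.Ioo_subset_Icc_self hq.1.1
  have hdiv := integral2_divergence_prod_of_hasFDerivAt_off_countable
    (pF u lam) (pG u lam) (fun q => fderiv ℝ (pF u lam) q) (fun q => fderiv ℝ (pG u lam) q)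
    a₁ 0 b₁ (2 * Real.pi) ∅ Set.countable_empty
    (fun q hq => ((hkey q (hq1 q hq)).1).continuousAt.continuousWithinAt)
    (fun q hq => ((hkey q (hq1 q hq)).2.1).continuousAt.continuousWithinAt)
    (fun q hq => ((hkey q (hq1' q hq)).1).hasFDerivAt)
    (fun q hq => ((hkey q (hq1' q hq)).2.1).hasFDerivAt)
    (by
      refine (integrableOn_congr_fun (g := fun _ => (0:ℂ)) ?_ (measurableSet_uIcc.prod measurableSet_uIcc)).mpr
        (integrableOn_zero)
      intro q hq
      exact (hkey q (hq1 q hq)).2.2)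
  have hL : (∫ x in a₁..b₁, ∫ y in (0:ℝ)..(2 * Real.pi),
      fderiv ℝ (pF u lam) (x, y) (1, 0) + fderiv ℝ (pG u lam) (x, y) (0, 1)) = 0 := by
    rw [show (∫ x in a₁..b₁, ∫ y in (0:ℝ)..(2 * Real.pi),
        fderiv ℝ (pF u lam) (x, y) (1, 0) + fderiv ℝ (pG u lam) (x, y) (0, 1))
        = ∫ x in a₁..b₁, (0:ℂ) from ?_, intervalIntegral.integral_zero]
    apply intervalIntegral.integral_congr
    intro x hx
    show (∫ y in (0:ℝ)..(2 * Real.pi),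
        fderiv ℝ (pF u lam) (x, y) (1, 0) + fderiv ℝ (pG u lam) (x, y) (0, 1)) = 0
    rw [show (∫ y in (0:ℝ)..(2 * Real.pi),
        fderiv ℝ (pF u lam) (x, y) (1, 0) + fderiv ℝ (pG u lam) (x, y) (0, 1))
        = ∫ y in (0:ℝ)..(2 * Real.pi), (0:ℂ) from ?_, intervalIntegral.integral_zero]
    apply intervalIntegral.integral_congr
    intro y _
    show fderiv ℝ (pF u lam) (x, y) (1, 0) + fderiv ℝ (pG u lam) (x, y) (0, 1) = 0
    exact (hkey (x, y) hx).2.2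
  rw [hL] at hdiv
  have hGcancel : (∫ x in a₁..b₁, pG u lam (x, 2 * Real.pi)) = ∫ x in a₁..b₁, pG u lam (x, 0) := by
    apply intervalIntegral.integral_congr
    intro x _
    exact pG_periodic u lam x
  rw [hGcancel] at hdiv
  have := hdiv
  rw [← boundary_eq u lam r hr0, ← boundary_eq u lam s hs0]
  rw [← ha₁, ← hb₁] at *
  linear_combination this

/-- If `u` is a smooth eigenfunction of the (positive) Laplacian with eigenvalue `λ` on the
annulus `{r₁ < |z| < r₂}`, i.e. `∂ₓ²u + ∂_y²u = −λu` there, then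
`I(r) = ∫₀^{2π} [ ((∂_z u)(re^{iθ}))² i r e^{iθ} + (λ/4)(u(re^{iθ}))² i r e^{−iθ} ] dθ`
is constant on `(r₁, r₂)`. -/
theorem stmt2 (r₁ r₂ : ℝ) (hr₁ : 0 ≤ r₁) (hr : r₁ < r₂) (lam : ℝ) (u : ℂ → ℝ)
    (hu : ContDiffOn ℝ (⊤ : ℕ∞) u {z : ℂ | r₁ < ‖z‖ ∧ ‖z‖ < r₂})
    (heig : ∀ z ∈ {z : ℂ | r₁ < ‖z‖ ∧ ‖z‖ < r₂},
      fderiv ℝ (fun p : ℂ => fderiv ℝ u p 1) z 1 +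
        fderiv ℝ (fun p : ℂ => fderiv ℝ u p Complex.I) z Complex.I = -lam * u z) :
    ∀ r ∈ Set.Ioo r₁ r₂, ∀ s ∈ Set.Ioo r₁ r₂,
      circleFormIntegral u lam r = circleFormIntegral u lam s := by
  intro r hrm s hsm
  rcases le_total r s with h | h
  · exact const_on r₁ r₂ hr₁ lam u hu heig hrm.1 h hsm.2
  · exact (const_on r₁ r₂ hr₁ lam u hu heig hsm.1 h hrm.2).symm
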